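/- Fix integers n ≥ 4 and l with 1 ≤ l and l + 2 ≤ n, and let Δp be as defined below. Let x < y < z be real numbers, let v₁ ≤ v₂ ≤ … ≤ v_n be real numbers with v_l = v_{l+1} = v_{l+2} = y and x ≤ v_i ≤ z for every i, and let f_x, f_z : ℝ → ℝ each be concave on [0,∞) and nonincreasing on [0,∞). Then at least one of the following holds: ∑_{i=1}^{n} Δp(i)·f_x(|x − v_i|) ≥ 0, or ∑_{i=1}^{n} Δp(i)·f_z(|z − v_i|) ≥ 0. -/

import Mathlib

/-!
Let `S j = Δp 1 + ⋯ + Δp j`. The weights `C(M, i) / 2 ^ M` form the law of `Bin(M, 1/2)`, and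
`Bin(M + 3) = Bin(M) + Bin(3)` lies stochastically between `Bin(M)` and `Bin(M) + 3`; hence
`S j ≤ 0` for `j < l`, `S j ≥ 0` for `j ≥ l + 2`, and `S n = 0`. Abel summation turns each of the
two sums into `∑ S j * (u j - u (j + 1))`, where `u j` is the utility of ball `j`; the terms at the
three balls sitting at `y` vanish. These increments are `≥ 0` for `f_x` and `≤ 0` for `f_z`, and
concavity makes the ratio of the `f_x`-increment to the `f_z`-increment larger right of `y` than
left of it. Expanding the product of the two sums shows that they cannot both be negative.
-/

open Finset

section Concave

variable {𝕜 : Type*} [Field 𝕜] [LinearOrder 𝕜] [IsStrictOrderedRing 𝕜] {s : Set 𝕜} {f g : 𝕜 → 𝕜}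

theorem ConcaveOn.sub_mul_sub_le (hf : ConcaveOn 𝕜 s f) {a b c d : 𝕜} (ha : a ∈ s) (hb : b ∈ s)
    (hc : c ∈ s) (hd : d ∈ s) (hab : a ≤ b) (hbc : b ≤ c) (hcd : c ≤ d) :
    (f d - f c) * (b - a) ≤ (f b - f a) * (d - c) := by
  rcases hab.eq_or_lt with rfl | hab
  · simp
  rcases hcd.eq_or_lt with rfl | hcd
  · simp
  have hslope : (f d - f c) / (d - c) ≤ (f b - f a) / (b - a) := by
    rcases hbc.eq_or_lt with rfl | hbc
    · exact hf.slope_anti_adjacent ha hd hab hcd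
    · exact (hf.slope_anti_adjacent hb hd hbc hcd).trans (hf.slope_anti_adjacent ha hc hab hbc)
  rwa [div_le_div_iff₀ (sub_pos.2 hcd) (sub_pos.2 hab)] at hslope

/-- Concavity makes the drop of `f` (distance from `x`) per unit length grow from the gap
`[a, a']` to the gap `[b, b']`, while the rise of `g` (distance from `z`) shrinks. -/
theorem ConcaveOn.sub_mul_sub_le_of_antitoneOn
    (hf : ConcaveOn 𝕜 (Set.Ici 0) f) (hf' : AntitoneOn f (Set.Ici 0))
    (hg : ConcaveOn 𝕜 (Set.Ici 0) g) (hg' : AntitoneOn g (Set.Ici 0))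
    {x a a' b b' z : 𝕜} (hxa : x ≤ a) (ha : a ≤ a') (hab : a' ≤ b) (hb : b ≤ b') (hbz : b' ≤ z) :
    (f (b - x) - f (b' - x)) * (g (z - a) - g (z - a')) ≤
      (f (a - x) - f (a' - x)) * (g (z - b) - g (z - b')) := by
  have mem : ∀ {t : 𝕜}, 0 ≤ t → t ∈ Set.Ici (0 : 𝕜) := Set.mem_Ici.2
  rcases ha.eq_or_lt with rfl | ha
  · simp
  rcases hb.eq_or_lt with rfl | hb
  · simp
  have hfb : 0 ≤ f (b - x) - f (b' - x) :=
    sub_nonneg.2 (hf' (mem (by linarith)) (mem (by linarith)) (by linarith))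
  have hgb : 0 ≤ g (z - b') - g (z - b) :=
    sub_nonneg.2 (hg' (mem (by linarith)) (mem (by linarith)) (by linarith))
  have hfx : (f (a - x) - f (a' - x)) * (b' - b) ≤ (f (b - x) - f (b' - x)) * (a' - a) := by
    have := hf.sub_mul_sub_le (a := a - x) (b := a' - x) (c := b - x) (d := b' - x)
      (mem (by linarith)) (mem (by linarith)) (mem (by linarith)) (mem (by linarith))
      (by linarith) (by linarith) (by linarith)
    linear_combination this
  have hgz : (g (z - b') - g (z - b)) * (a' - a) ≤ (g (z - a') - g (z - a)) * (b' - b) := by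
    have := hg.sub_mul_sub_le (a := z - b') (b := z - b) (c := z - a') (d := z - a)
      (mem (by linarith)) (mem (by linarith)) (mem (by linarith)) (mem (by linarith))
      (by linarith) (by linarith) (by linarith)
    linear_combination this
  have hprod := mul_le_mul hfx hgz (mul_nonneg hgb (by linarith)) (mul_nonneg hfb (by linarith))
  have hpos : 0 < (a' - a) * (b' - b) := mul_pos (by linarith) (by linarith)
  refine le_of_mul_le_mul_right ?_ hpos
  linear_combination hprod

end Concave

namespace TriadicConsensus

noncomputable def binomPmf (M i : ℕ) : ℝ := (1 / 2 : ℝ) ^ M * M.choose i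

/-- `binomCdf M K = ℙ(Bin(M, 1/2) < K)`. -/
noncomputable def binomCdf (M K : ℕ) : ℝ := ∑ i ∈ range K, binomPmf M i

theorem binomCdf_succ_succ (M K : ℕ) :
    binomCdf (M + 1) (K + 1) = (binomCdf M K + binomCdf M (K + 1)) / 2 := by
  simp only [binomCdf, binomPmf, sum_range_succ' _ K, Nat.choose_succ_succ', Nat.cast_add,
    mul_add, sum_add_distrib, Nat.choose_zero_right, pow_succ, ← mul_sum]
  ring

theorem binomCdf_mono (M : ℕ) : Monotone (binomCdf M) :=
  monotone_nat_of_le_succ fun K => by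
    rw [binomCdf, binomCdf, sum_range_succ]
    exact le_add_of_nonneg_right (by unfold binomPmf; positivity)

theorem binomCdf_succ_le (M K : ℕ) : binomCdf (M + 1) K ≤ binomCdf M K := by
  cases K with
  | zero => simp [binomCdf]
  | succ K =>
    rw [binomCdf_succ_succ]
    linarith [binomCdf_mono M K.le_succ]

theorem binomCdf_le_succ_succ (M K : ℕ) : binomCdf M K ≤ binomCdf (M + 1) (K + 1) := by
  rw [binomCdf_succ_succ]
  linarith [binomCdf_mono M K.le_succ]

theorem binomCdf_add_le (M K k : ℕ) : binomCdf (M + k) K ≤ binomCdf M K := by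
  induction k with
  | zero => rfl
  | succ k ih => exact (binomCdf_succ_le _ K).trans ih

theorem binomCdf_le_add_add (M K k : ℕ) : binomCdf M K ≤ binomCdf (M + k) (K + k) := by
  induction k with
  | zero => rfl
  | succ k ih => exact ih.trans (binomCdf_le_succ_succ _ _)

theorem binomCdf_self_add_one (M : ℕ) : binomCdf M (M + 1) = 1 := by
  simp only [binomCdf, binomPmf]
  rw [← mul_sum, ← Nat.cast_sum, Nat.sum_range_choose]
  push_cast
  rw [← mul_pow]
  norm_num

section InsertZeros

variable {M : Type*} [AddCommMonoid M]

def insertZeros (m k : ℕ) (g : ℕ → M) (i : ℕ) : M :=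
  if i < m then g i else if i < m + k then 0 else g (i - k)

theorem sum_range_insertZeros_of_le {m k j : ℕ} (g : ℕ → M) (h : j ≤ m) :
    ∑ i ∈ range j, insertZeros m k g i = ∑ i ∈ range j, g i :=
  sum_congr rfl fun i hi => if_pos (by rw [mem_range] at hi; omega)

theorem sum_range_add_insertZeros {m k j : ℕ} (g : ℕ → M) (h : m ≤ j) :
    ∑ i ∈ range (j + k), insertZeros m k g i = ∑ i ∈ range j, g i := by
  induction j, h using Nat.le_induction with
  | base =>
    have hzero : ∑ i ∈ range k, insertZeros m k g (m + i) = 0 :=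
      sum_eq_zero fun i hi => by simp [insertZeros, mem_range.1 hi]
    rw [sum_range_add, sum_range_insertZeros_of_le g le_rfl, hzero, add_zero]
  | succ j hj ih =>
    rw [Nat.add_right_comm, sum_range_succ, ih, sum_range_succ]
    simp [insertZeros, show ¬ j + k < m by omega, show ¬ j + k < m + k by omega]

end InsertZeros

/-- For `n = N + 4` and `l = m + 1`, `winProbDiff N m i` is `Δp (i + 1)`: the balls of `Q` are
those of `P` with three consecutive ones removed at index `m`. -/
noncomputable def winProbDiff (N m i : ℕ) : ℝ :=
  binomPmf (N + 3) i - insertZeros m 3 (binomPmf N) i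

theorem sum_range_winProbDiff (N m j : ℕ) :
    ∑ i ∈ range j, winProbDiff N m i =
      binomCdf (N + 3) j - ∑ i ∈ range j, insertZeros m 3 (binomPmf N) i := by
  simp only [winProbDiff, sum_sub_distrib, binomCdf]

theorem sum_range_winProbDiff_nonpos {N m j : ℕ} (h : j ≤ m) :
    ∑ i ∈ range j, winProbDiff N m i ≤ 0 := by
  rw [sum_range_winProbDiff, sum_range_insertZeros_of_le _ h, sub_nonpos]
  exact binomCdf_add_le N j 3

theorem sum_range_add_three_winProbDiff_nonneg {N m k : ℕ} (h : m ≤ k) :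
    0 ≤ ∑ i ∈ range (k + 3), winProbDiff N m i := by
  rw [sum_range_winProbDiff, sum_range_add_insertZeros _ h, sub_nonneg]
  exact binomCdf_le_add_add N k 3

theorem sum_range_winProbDiff_eq_zero {N m : ℕ} (h : m ≤ N + 1) :
    ∑ i ∈ range (N + 4), winProbDiff N m i = 0 := by
  rw [sum_range_winProbDiff, show N + 4 = N + 1 + 3 from rfl, sum_range_add_insertZeros _ h,
    sub_eq_zero]
  exact (binomCdf_self_add_one _).trans (binomCdf_self_add_one N).symm

theorem sum_winProbDiff_mul_eq {N m : ℕ} (hm : m ≤ N + 1) (u : ℕ → ℝ)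
    (hu : u m = u (m + 1)) (hu' : u (m + 1) = u (m + 2)) :
    ∑ i ∈ range (N + 4), winProbDiff N m i * u i =
      ∑ i ∈ range m, (∑ k ∈ range (i + 1), winProbDiff N m k) * (u i - u (i + 1)) +
        ∑ i ∈ Ico (m + 2) (N + 3),
          (∑ k ∈ range (i + 1), winProbDiff N m k) * (u i - u (i + 1)) := by
  set S : ℕ → ℝ := fun j => ∑ k ∈ range j, winProbDiff N m k
  have habel : ∑ i ∈ range (N + 4), winProbDiff N m i * u i =
      ∑ i ∈ range (N + 3), S (i + 1) * (u i - u (i + 1)) := by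
    have := sum_range_by_parts u (winProbDiff N m) (N + 4)
    simp only [smul_eq_mul, sum_range_winProbDiff_eq_zero hm, mul_zero, zero_sub] at this
    simp_rw [mul_comm (winProbDiff N m _) (u _)]
    rw [this, ← sum_neg_distrib]
    exact sum_congr rfl fun i _ => by ring
  have hmid : ∑ i ∈ Ico m (m + 2), S (i + 1) * (u i - u (i + 1)) = 0 := by
    rw [sum_Ico_succ_top (by omega), sum_Ico_succ_top (by omega), Ico_self, sum_empty, hu, hu']
    ring
  rw [habel, ← sum_range_add_sum_Ico _ (by omega : m ≤ N + 3),
    ← sum_Ico_consecutive _ (by omega : m ≤ m + 2) (by omega : m + 2 ≤ N + 3), hmid, zero_add]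

theorem sum_mul_nonneg_or_of_cross {ι : Type*} (I J : Finset ι) (S p r : ι → ℝ)
    (hSI : ∀ i ∈ I, S i ≤ 0) (hSJ : ∀ j ∈ J, 0 ≤ S j) (hpJ : ∀ j ∈ J, 0 ≤ p j)
    (hrI : ∀ i ∈ I, r i ≤ 0) (hcross : ∀ i ∈ I, ∀ j ∈ J, p j * r i ≤ p i * r j) :
    0 ≤ ∑ i ∈ I, S i * p i + ∑ j ∈ J, S j * p j ∨
      0 ≤ ∑ i ∈ I, S i * r i + ∑ j ∈ J, S j * r j := by
  set A := ∑ i ∈ I, S i * p i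
  set B := ∑ j ∈ J, S j * p j
  set C := ∑ i ∈ I, S i * r i
  set D := ∑ j ∈ J, S j * r j
  have hB : 0 ≤ B := sum_nonneg fun j hj => mul_nonneg (hSJ j hj) (hpJ j hj)
  have hC : 0 ≤ C := sum_nonneg fun i hi => mul_nonneg_of_nonpos_of_nonpos (hSI i hi) (hrI i hi)
  have hkey : A * D ≤ B * C := by
    rw [mul_comm B, sum_mul_sum, sum_mul_sum]
    refine sum_le_sum fun i hi => sum_le_sum fun j hj => ?_
    have := mul_nonpos_of_nonpos_of_nonneg (mul_nonpos_of_nonpos_of_nonneg (hSI i hi) (hSJ j hj))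
      (sub_nonneg.2 (hcross i hi j hj))
    linear_combination this
  by_contra! h
  have : B * C < A * D :=
    calc B * C ≤ B * -D := mul_le_mul_of_nonneg_left (by linarith) hB
      _ < -A * -D := mul_lt_mul_of_pos_right (by linarith) (by linarith)
      _ = A * D := by ring
  linarith

theorem sum_winProbDiff_nonneg_or {N m : ℕ} (hm : m ≤ N + 1) {w : ℕ → ℝ}
    (hw : MonotoneOn w (Set.Iic (N + 3))) (hwm : w m = w (m + 1)) (hwm' : w (m + 1) = w (m + 2))
    {x z : ℝ} (hx : x ≤ w 0) (hz : w (N + 3) ≤ z) {f g : ℝ → ℝ}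
    (hf : ConcaveOn ℝ (Set.Ici 0) f) (hf' : AntitoneOn f (Set.Ici 0))
    (hg : ConcaveOn ℝ (Set.Ici 0) g) (hg' : AntitoneOn g (Set.Ici 0)) :
    0 ≤ ∑ i ∈ range (N + 4), winProbDiff N m i * f (w i - x) ∨
      0 ≤ ∑ i ∈ range (N + 4), winProbDiff N m i * g (z - w i) := by
  have mono : ∀ {i j}, i ≤ j → j ≤ N + 3 → w i ≤ w j := fun hij hj =>
    hw (Set.mem_Iic.2 (hij.trans hj)) (Set.mem_Iic.2 hj) hij
  have hxw : ∀ {i}, i ≤ N + 3 → x ≤ w i := fun hi => hx.trans (mono (Nat.zero_le _) hi)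
  have hwz : ∀ {i}, i ≤ N + 3 → w i ≤ z := fun hi => (mono hi le_rfl).trans hz
  have mem : ∀ {t : ℝ}, 0 ≤ t → t ∈ Set.Ici (0 : ℝ) := Set.mem_Ici.2
  rw [sum_winProbDiff_mul_eq hm (fun i => f (w i - x)) (by rw [hwm]) (by rw [hwm']),
    sum_winProbDiff_mul_eq hm (fun i => g (z - w i)) (by rw [hwm]) (by rw [hwm'])]
  refine sum_mul_nonneg_or_of_cross _ _ (fun i => ∑ k ∈ range (i + 1), winProbDiff N m k) _ _
    (fun i hi => sum_range_winProbDiff_nonpos (by rw [mem_range] at hi; omega))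
    (fun j hj => ?_) (fun j hj => ?_) (fun i hi => ?_) (fun i hi j hj => ?_)
  · obtain ⟨k, rfl⟩ : ∃ k, j = k + 2 := ⟨j - 2, by rw [mem_Ico] at hj; omega⟩
    exact sum_range_add_three_winProbDiff_nonneg (by rw [mem_Ico] at hj; omega)
  · rw [mem_Ico] at hj
    have hxj := hxw (i := j) (by omega)
    have hjj := mono (Nat.le_succ j) (by omega)
    exact sub_nonneg.2 (hf' (mem (by linarith)) (mem (by linarith)) (by linarith))
  · rw [mem_range] at hi
    have hiz := hwz (i := i + 1) (by omega)
    have hii := mono (Nat.le_succ i) (by omega)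
    exact sub_nonpos.2 (hg' (mem (by linarith)) (mem (by linarith)) (by linarith))
  · rw [mem_range] at hi
    rw [mem_Ico] at hj
    exact ConcaveOn.sub_mul_sub_le_of_antitoneOn hf hf' hg hg' (hxw (by omega))
      (mono (Nat.le_succ i) (by omega)) (mono (by omega) (by omega))
      (mono (Nat.le_succ j) (by omega)) (hwz (by omega))

end TriadicConsensus

open TriadicConsensus

theorem existence_lemma_partA_general
    (n l : ℕ) (hn : 4 ≤ n) (hl : 1 ≤ l) (hln : l + 2 ≤ n)
    (Δp : ℕ → ℝ)
    (hΔp₁ : ∀ i : ℕ, 1 ≤ i → i ≤ l - 1 →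
      Δp i = (1 / 2 : ℝ) ^ (n - 1) * ((n - 1).choose (i - 1) : ℝ)
           - (1 / 2 : ℝ) ^ (n - 4) * ((n - 4).choose (i - 1) : ℝ))
    (hΔp₂ : ∀ i : ℕ, l ≤ i → i ≤ l + 2 →
      Δp i = (1 / 2 : ℝ) ^ (n - 1) * ((n - 1).choose (i - 1) : ℝ))
    (hΔp₃ : ∀ i : ℕ, l + 3 ≤ i → i ≤ n →
      Δp i = (1 / 2 : ℝ) ^ (n - 1) * ((n - 1).choose (i - 1) : ℝ)
           - (1 / 2 : ℝ) ^ (n - 4) * ((n - 4).choose (i - 4) : ℝ))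
    (x y z : ℝ)
    (v : ℕ → ℝ)
    (hvmono : ∀ i j : ℕ, 1 ≤ i → i ≤ j → j ≤ n → v i ≤ v j)
    (hvl : v l = y) (hvl1 : v (l + 1) = y) (hvl2 : v (l + 2) = y)
    (hvrange : ∀ i : ℕ, 1 ≤ i → i ≤ n → x ≤ v i ∧ v i ≤ z)
    (fx fz : ℝ → ℝ)
    (hfx_conc : ConcaveOn ℝ (Set.Ici (0 : ℝ)) fx)
    (hfx_anti : AntitoneOn fx (Set.Ici (0 : ℝ)))
    (hfz_conc : ConcaveOn ℝ (Set.Ici (0 : ℝ)) fz)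
    (hfz_anti : AntitoneOn fz (Set.Ici (0 : ℝ))) :
    0 ≤ ∑ i ∈ Finset.Icc 1 n, Δp i * fx |x - v i| ∨
    0 ≤ ∑ i ∈ Finset.Icc 1 n, Δp i * fz |z - v i| := by
  obtain ⟨N, rfl⟩ : ∃ N, n = N + 4 := ⟨n - 4, by omega⟩
  obtain ⟨m, rfl⟩ : ∃ m, l = m + 1 := ⟨l - 1, by omega⟩
  have hΔ : ∀ i < N + 4, Δp (i + 1) = winProbDiff N m i := by
    intro i hi
    simp only [winProbDiff, insertZeros, binomPmf]
    split_ifs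
    · rw [hΔp₁ (i + 1) (by omega) (by omega)]
      simp
    · rw [hΔp₂ (i + 1) (by omega) (by omega)]
      simp
    · rw [hΔp₃ (i + 1) (by omega) (by omega)]
      simp
  have hsum : ∀ u u' : ℕ → ℝ, (∀ i < N + 4, u (i + 1) = u' i) →
      ∑ i ∈ Icc 1 (N + 4), Δp i * u i = ∑ i ∈ range (N + 4), winProbDiff N m i * u' i := by
    intro u u' hu
    rw [← Ico_add_one_right_eq_Icc, sum_Ico_eq_sum_range]
    refine sum_congr (by simp) fun i hi => ?_
    rw [mem_range] at hi
    rw [add_comm 1 i, hΔ i hi, hu i hi]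
  rw [hsum (fun i => fx |x - v i|) (fun i => fx (v (i + 1) - x)) fun i hi => by
      rw [abs_sub_comm, abs_of_nonneg (sub_nonneg.2 (hvrange (i + 1) (by omega) hi).1)],
    hsum (fun i => fz |z - v i|) (fun i => fz (z - v (i + 1))) fun i hi => by
      rw [abs_of_nonneg (sub_nonneg.2 (hvrange (i + 1) (by omega) hi).2)]]
  exact sum_winProbDiff_nonneg_or (w := fun i => v (i + 1)) (by omega)
    (fun i _ j hj hij => hvmono (i + 1) (j + 1) (by omega) (by omega) (by simpa using hj))
    (hvl.trans hvl1.symm) (hvl1.trans hvl2.symm) (hvrange 1 le_rfl (by omega)).1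
    (hvrange (N + 4) (by omega) le_rfl).2 hfx_conc hfx_anti hfz_conc hfz_anti

theorem existence_lemma_partA
    (n l : ℕ) (hn : 4 ≤ n) (hl : 1 ≤ l) (hln : l + 2 ≤ n)
    (Δp : ℕ → ℝ)
    (hΔp₁ : ∀ i : ℕ, 1 ≤ i → i ≤ l - 1 →
      Δp i = (1 / 2 : ℝ) ^ (n - 1) * ((n - 1).choose (i - 1) : ℝ)
           - (1 / 2 : ℝ) ^ (n - 4) * ((n - 4).choose (i - 1) : ℝ))
    (hΔp₂ : ∀ i : ℕ, l ≤ i → i ≤ l + 2 →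
      Δp i = (1 / 2 : ℝ) ^ (n - 1) * ((n - 1).choose (i - 1) : ℝ))
    (hΔp₃ : ∀ i : ℕ, l + 3 ≤ i → i ≤ n →
      Δp i = (1 / 2 : ℝ) ^ (n - 1) * ((n - 1).choose (i - 1) : ℝ)
           - (1 / 2 : ℝ) ^ (n - 4) * ((n - 4).choose (i - 4) : ℝ))
    (x y z : ℝ) (hxy : x < y) (hyz : y < z)
    (v : ℕ → ℝ)
    (hvmono : ∀ i j : ℕ, 1 ≤ i → i ≤ j → j ≤ n → v i ≤ v j)
    (hvl : v l = y) (hvl1 : v (l + 1) = y) (hvl2 : v (l + 2) = y)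
    (hvrange : ∀ i : ℕ, 1 ≤ i → i ≤ n → x ≤ v i ∧ v i ≤ z)
    (fx fz : ℝ → ℝ)
    (hfx_conc : ConcaveOn ℝ (Set.Ici (0 : ℝ)) fx)
    (hfx_anti : AntitoneOn fx (Set.Ici (0 : ℝ)))
    (hfz_conc : ConcaveOn ℝ (Set.Ici (0 : ℝ)) fz)
    (hfz_anti : AntitoneOn fz (Set.Ici (0 : ℝ))) :
    0 ≤ ∑ i ∈ Finset.Icc 1 n, Δp i * fx |x - v i| ∨
    0 ≤ ∑ i ∈ Finset.Icc 1 n, Δp i * fz |z - v i| :=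
  existence_lemma_partA_general n l hn hl hln Δp hΔp₁ hΔp₂ hΔp₃ x y z v hvmono hvl hvl1 hvl2 hvrange
    fx fz hfx_conc hfx_anti hfz_conc hfz_anti
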